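/- arXiv:0706.1249 — 7 statements merged into one kernel-verified Lean document; each statement's English description precedes it below -/
import Mathlib

section
/- Let G be a loop with identity e and H a quasigroup isotopic to G under a left isotopism (A,B,B). Then A is an isomorphism from G onto H if and only if eB lies in the right nucleus of H. -/
def IsLoop {α : Type*} (mul : α → α → α) (e : α) : Prop :=
  (∀ x, mul e x = x) ∧ (∀ x, mul x e = x) ∧
  (∀ a, Function.Bijective (mul a)) ∧ (∀ a, Function.Bijective fun x => mul x a)

def IsQuasigroup {α : Type*} (mul : α → α → α) : Prop :=
  (∀ a, Function.Bijective (mul a)) ∧ (∀ a, Function.Bijective fun x => mul x a)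

/-- If a loop G with identity e and a quasigroup H are isotopic under a
left isotopism (A,B,B), then A is an isomorphism G → H iff eB ∈ N_ρ(H). -/
theorem left_isotopism_isomorphism_iff {G H : Type*}
    (mul : G → G → G) (e : G) (hG : IsLoop mul e)
    (mul' : H → H → H) (hH : IsQuasigroup mul')
    (A B : G ≃ H)
    (hiso : ∀ x y, mul' (A x) (B y) = B (mul x y)) :
    (∀ x y, A (mul x y) = mul' (A x) (A y)) ↔
      (∀ x y, mul' y (mul' x (B e)) = mul' (mul' y x) (B e)) := by
  have hB : ∀ x, B x = mul' (A x) (B e) := fun x => by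
    rw [hiso, hG.2.1]
  constructor
  · intro hA x y
    obtain ⟨u, rfl⟩ := A.surjective x
    obtain ⟨v, rfl⟩ := A.surjective y
    rw [← hB, ← hA, ← hB, hiso]
  · intro hN x y
    have := hB (mul x y)
    rw [← hiso, hB y, hN] at this
    exact (hH.2 (B e)).1 this.symm
end

section
/- Let G be a loop with identity e and H a quasigroup isotopic to G under a right isotopism (A,B,A). Then B is an isomorphism from G onto H if and only if eA lies in the left nucleus of H. -/
/-- If a loop G with identity e and a quasigroup H are isotopic under a
right isotopism (A,B,A), then B is an isomorphism G → H iff eA ∈ N_λ(H). -/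
theorem right_isotopism_isomorphism_iff {G H : Type*}
    (mul : G → G → G) (e : G) (hG : IsLoop mul e)
    (mul' : H → H → H) (hH : IsQuasigroup mul')
    (A B : G ≃ H)
    (hiso : ∀ x y, mul' (A x) (B y) = A (mul x y)) :
    (∀ x y, B (mul x y) = mul' (B x) (B y)) ↔
      (∀ x y, mul' (mul' (A e) x) y = mul' (A e) (mul' x y)) := by
  have hA : ∀ y, mul' (A e) (B y) = A y := by
    intro y; rw [hiso, hG.1]
  constructor
  · intro hB u v
    obtain ⟨x, rfl⟩ := B.surjective u
    obtain ⟨y, rfl⟩ := B.surjective v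
    rw [hA, hiso, ← hB, ← hA]
  · intro hN x y
    have := hH.1 (A e)
    apply this.1
    rw [← hN, hA, hA, hiso]
end

section
/- Let G = (Ω,·) be a loop with identity e and let H = (Ω,∘) be the e,g-principal isotope of G (so x∘y = xR_g^{-1} · y). Then G is an LC-loop if and only if H is an LC-loop. -/
/-- Forward direction: if G is LC, then its e,g-principal isotope is LC. -/
theorem lc_forward_aux {Ω : Type*}
    (mul : Ω → Ω → Ω) (e : Ω) (hG : IsLoop mul e)
    (g : Ω) (div : Ω → Ω → Ω) (hdiv : ∀ x, mul (div x g) g = x)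
    (omul : Ω → Ω → Ω) (homul : ∀ x y, omul x y = mul (div x g) y)
    (hLC : ∀ x y z, mul (mul x x) (mul y z) = mul (mul x (mul x y)) z) :
    ∀ x y z, omul (omul x x) (omul y z) = omul (omul x (omul x y)) z := by
  obtain ⟨h1, h2, h3, h4⟩ := hG
  have hRg : Function.Injective fun x => mul x g := (h4 g).1
  have hf : ∀ w, div (mul w g) g = w := fun w => hRg (by simpa using hdiv (mul w g))
  intro x y z
  obtain ⟨a, rfl⟩ : ∃ a, mul a g = x := ⟨div x g, hdiv x⟩
  obtain ⟨b, rfl⟩ : ∃ b, mul b g = y := ⟨div y g, hdiv y⟩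
  have e1 : mul a (mul a g) = mul (mul a a) g := by
    have := hLC a g e; rw [h2, h2] at this; exact this.symm
  have e2 : mul a (mul a (mul b g)) = mul (mul a (mul a b)) g := by
    have h' := hLC a (mul b g) e
    rw [h2, h2] at h'
    rw [← h', hLC a b g]
  calc omul (omul (mul a g) (mul a g)) (omul (mul b g) z)
      = mul (div (mul a (mul a g)) g) (mul b z) := by rw [homul, homul, homul, hf, hf]
    _ = mul (mul a a) (mul b z) := by rw [e1, hf]
    _ = mul (mul a (mul a b)) z := hLC a b z
    _ = omul (omul (mul a g) (omul (mul a g) (mul b g))) z := by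
        rw [homul, homul, homul, hf, e2, hf]

/-- A loop G is an LC-loop iff its e,g-principal isotope
H, x∘y = (x/g)·y, is an LC-loop. -/
theorem lc_iff_left_isotope_lc {Ω : Type*}
    (mul : Ω → Ω → Ω) (e : Ω) (hG : IsLoop mul e)
    (g : Ω) (div : Ω → Ω → Ω) (hdiv : ∀ x, mul (div x g) g = x)
    (omul : Ω → Ω → Ω) (homul : ∀ x y, omul x y = mul (div x g) y) :
    (∀ x y z, mul (mul x x) (mul y z) = mul (mul x (mul x y)) z) ↔
      (∀ x y z, omul (omul x x) (omul y z) = omul (omul x (omul x y)) z) := by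
  obtain ⟨h1, h2, h3, h4⟩ := hG
  have hRg : Function.Injective fun x => mul x g := (h4 g).1
  have hf : ∀ w, div (mul w g) g = w := fun w => hRg (by simpa using hdiv (mul w g))
  constructor
  · exact lc_forward_aux mul e ⟨h1, h2, h3, h4⟩ g div hdiv omul homul
  · intro hH
    -- G is the g,e-principal isotope of H, which is a loop with identity g.
    have hfg : div g g = e := by have := hf e; rwa [h1] at this
    have hfbij : Function.Bijective (fun x => div x g) := by
      constructor
      · intro u v h
        rw [← hdiv u, ← hdiv v, show div u g = div v g from h]
      · intro w; exact ⟨mul w g, hf w⟩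
    have hH_loop : IsLoop omul g := by
      refine ⟨?_, ?_, ?_, ?_⟩
      · intro x; rw [homul, hfg, h1]
      · intro x; rw [homul, hdiv]
      · intro a
        have : omul a = mul (div a g) := funext fun y => homul a y
        rw [this]; exact h3 (div a g)
      · intro a
        have : (fun x => omul x a) = (fun w => mul w a) ∘ (fun x => div x g) :=
          funext fun x => homul x a
        rw [this]; exact (h4 a).comp hfbij
    have hdiv' : ∀ x, omul ((fun x _ => mul x g) x e) e = x := by
      intro x; rw [homul, hf, h2]
    have homul' : ∀ x y, mul x y = omul ((fun x _ => mul x g) x e) y := by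
      intro x y; rw [homul, hf]
    exact lc_forward_aux omul g hH_loop e (fun x _ => mul x g) hdiv' mul homul' hH
end

section
/- Let G = (Ω,·) be a loop with identity e and let H = (Ω,∘) be the f,e-principal isotope of G (so x∘y = x · yL_f^{-1}). Then G is an RC-loop if and only if H is an RC-loop. -/
theorem rc_isotope_fwd {Ω : Type*}
    (mul : Ω → Ω → Ω) (e : Ω) (hG : IsLoop mul e)
    (f : Ω) (ld : Ω → Ω → Ω) (hld : ∀ y, mul f (ld f y) = y)
    (omul : Ω → Ω → Ω) (homul : ∀ x y, omul x y = mul x (ld f y))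
    (hRC : ∀ x y z, mul (mul z y) (mul x x) = mul z (mul (mul y x) x)) :
    ∀ x y z, omul (omul z y) (omul x x) = omul z (omul (omul y x) x) := by
  obtain ⟨he1, he2, hlb, _⟩ := hG
  have Linv : ∀ w, ld f (mul f w) = w := fun w => (hlb f).1 (by rw [hld])
  intro x y z
  set a := ld f x with ha
  set b := ld f y with hb
  have hx : x = mul f a := (hld x).symm
  have hy : y = mul f b := (hld y).symm
  have key1 : mul (mul f a) a = mul f (mul a a) := by
    have h := hRC a f e
    rw [he1, he1] at h
    exact h.symm
  have key2 : mul (mul (mul f b) a) a = mul f (mul (mul b a) a) := by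
    have h1 := hRC a (mul f b) e
    rw [he1, he1] at h1
    rw [← h1, hRC a b f]
  simp only [homul, ← ha, ← hb]
  rw [hx, hy, key1, key2, Linv, Linv]
  exact hRC a b z

/-- A loop G is an RC-loop iff its f,e-principal isotope
H, x∘y = x·(f\y), is an RC-loop. -/
theorem rc_iff_right_isotope_rc {Ω : Type*}
    (mul : Ω → Ω → Ω) (e : Ω) (hG : IsLoop mul e)
    (f : Ω) (ld : Ω → Ω → Ω) (hld : ∀ y, mul f (ld f y) = y)
    (omul : Ω → Ω → Ω) (homul : ∀ x y, omul x y = mul x (ld f y)) :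
    (∀ x y z, mul (mul z y) (mul x x) = mul z (mul (mul y x) x)) ↔
      (∀ x y z, omul (omul z y) (omul x x) = omul z (omul (omul y x) x)) := by
  obtain ⟨he1, he2, hlb, hrb⟩ := hG
  have Linv : ∀ w, ld f (mul f w) = w := fun w => (hlb f).1 (by rw [hld])
  have Lbij : Function.Bijective (ld f) := by
    constructor
    · intro u v h
      have := congrArg (mul f) h
      rwa [hld, hld] at this
    · intro u; exact ⟨mul f u, Linv u⟩
  have hlf : ld f f = e := by
    have := Linv e; rwa [he2] at this
  -- H = (Ω, omul) is a loop with identity f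
  have hH : IsLoop omul f := by
    refine ⟨?_, ?_, ?_, ?_⟩
    · intro x; rw [homul, hld]
    · intro x; rw [homul, hlf, he2]
    · intro a
      have : omul a = (mul a) ∘ (ld f) := by funext y; rw [homul]; rfl
      rw [this]; exact (hlb a).comp Lbij
    · intro a
      have : (fun x => omul x a) = (fun x => mul x (ld f a)) := by
        funext x; rw [homul]
      rw [this]; exact hrb (ld f a)
  constructor
  · exact rc_isotope_fwd mul e ⟨he1, he2, hlb, hrb⟩ f ld hld omul homul
  · intro hRC
    -- G is the (e, f)-principal isotope of H via ld' f' y = mul f y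
    refine rc_isotope_fwd omul f hH e (fun _ y => mul f y) ?_ mul ?_ hRC
    · intro y; simp only [homul, Linv, he1]
    · intro x y; simp only [homul, Linv]
end

section
/- Every C-loop that is a universal loop (all its loop isotopes are C-loops) is a Moufang loop. -/
/-- The C-loop identity. -/
def CIdentity {α : Type*} (mul : α → α → α) : Prop :=
  ∀ x y z, mul x (mul y (mul y z)) = mul (mul (mul x y) y) z

/-- A universal C-loop (every loop isotope is a C-loop) is a Moufang loop. -/
theorem universal_c_loop_is_moufang {Ω : Type u}
    (mul : Ω → Ω → Ω) (e : Ω) (hG : IsLoop mul e)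
    (hC : CIdentity mul)
    (huniv : ∀ (H : Type u) (mul' : H → H → H) (e' : H), IsLoop mul' e' →
      ∀ (A B C : Ω ≃ H), (∀ x y, mul' (A x) (B y) = C (mul x y)) → CIdentity mul') :
    ∀ x y z, mul (mul x y) (mul z x) = mul (mul x (mul y z)) x := by
  obtain ⟨he1, he2, hbl, hbr⟩ := hG
  -- right inverses
  have hinv : ∀ x : Ω, ∃ r, mul x r = e := fun x => (hbl x).2 e
  let i : Ω → Ω := fun x => Classical.choose (hinv x)
  have hi : ∀ x, mul x (i x) = e := fun x => Classical.choose_spec (hinv x)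
  -- Right inverse property: (t*y)*(i y) = t
  have rip : ∀ t y, mul (mul t y) (i y) = t := by
    intro t y
    obtain ⟨x, hx⟩ := (hbr y).2 t
    have h := hC x y (i y)
    rw [hi, he2] at h
    simp only [hx] at h
    exact h.symm
  -- Left inverse property: (i y)*(y*w) = w
  have lip : ∀ y w, mul (i y) (mul y w) = w := by
    intro y w
    obtain ⟨l, hl⟩ := (hbr y).2 e
    have hl' : mul l y = e := hl
    have key : ∀ w, mul l (mul y w) = w := by
      intro w
      obtain ⟨z, hz⟩ := (hbl y).2 w
      have h := hC l y z
      rw [hl', he1, hz] at h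
      exact h
    have hil : l = i y := by
      have := key (i y)
      rw [hi, he2] at this
      exact this
    rw [← hil]; exact key w
  -- y * (i y * w) = w
  have ylw : ∀ y w, mul y (mul (i y) w) = w := by
    intro y w
    apply (hbl (i y)).1
    exact lip y (mul (i y) w)
  have iy_y : ∀ y, mul (i y) y = e := by
    intro y
    have := lip y e
    rw [he2] at this
    exact this
  have ii : ∀ y, i (i y) = y := by
    intro y
    apply (hbl (i y)).1
    rw [hi, iy_y]
  have rip' : ∀ t y, mul (mul t (i y)) y = t := by
    intro t y
    have := rip t (i y)
    rw [ii] at this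
    exact this
  -- ========== Left Bol via the isotope  u ∘ v = u * (i c * v) ==========
  have leftBol : ∀ y b w, mul y (mul b (mul y w)) = mul (mul y (mul b y)) w := by
    intro y b w
    set c := i b with hc
    set m2 : Ω → Ω → Ω := fun u v => mul u (mul (i c) v) with hm2
    have hLoop : IsLoop m2 c := by
      refine ⟨?_, ?_, ?_, ?_⟩
      · intro v; show mul c (mul (i c) v) = v; exact ylw c v
      · intro x; show mul x (mul (i c) c) = x; rw [iy_y, he2]
      · intro a
        have : Function.Bijective ((mul a) ∘ (mul (i c))) := (hbl a).comp (hbl (i c))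
        exact this
      · intro a
        exact hbr (mul (i c) a)
    have hcompat : ∀ x y, m2 ((Equiv.refl Ω) x) ((Equiv.ofBijective (mul c) (hbl c)) y)
        = (Equiv.refl Ω) (mul x y) := by
      intro x y
      show mul x (mul (i c) (mul c y)) = mul x y
      rw [lip c y]
    have hC2 := huniv Ω m2 c hLoop (Equiv.refl Ω) (Equiv.ofBijective (mul c) (hbl c))
      (Equiv.refl Ω) hcompat
    have hicb : i c = b := ii b
    have h := hC2 c y (mul (i b) w)
    have hcid : ∀ t, m2 c t = t := fun t => ylw c t
    rw [hcid, hcid] at h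
    -- h : m2 y (m2 y z) = m2 (m2 y y) z  with z = (i b) * w
    simp only [hm2, hicb] at h
    rw [ylw b w] at h
    exact h
  -- ========== Right Bol via the isotope  u ∘ v = (u * i c) * v ==========
  have rightBol : ∀ u y t, mul (mul (mul u y) t) y = mul u (mul (mul y t) y) := by
    intro u y t
    set c := i t with hc
    set m1 : Ω → Ω → Ω := fun a v => mul (mul a (i c)) v with hm1
    have hLoop : IsLoop m1 c := by
      refine ⟨?_, ?_, ?_, ?_⟩
      · intro v; show mul (mul c (i c)) v = v; rw [hi, he1]
      · intro x; show mul (mul x (i c)) c = x; exact rip' x c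
      · intro a; exact hbl (mul a (i c))
      · intro a
        have : Function.Bijective ((fun s => mul s a) ∘ (fun s => mul s (i c))) :=
          (hbr a).comp (hbr (i c))
        exact this
    have hcompat : ∀ x y, m1 ((Equiv.ofBijective (fun s => mul s c) (hbr c)) x)
        ((Equiv.refl Ω) y) = (Equiv.refl Ω) (mul x y) := by
      intro x y
      show mul (mul (mul x c) (i c)) y = mul x y
      rw [rip x c]
    have hC1 := huniv Ω m1 c hLoop (Equiv.ofBijective (fun s => mul s c) (hbr c))
      (Equiv.refl Ω) (Equiv.refl Ω) hcompat
    have hict : i c = t := ii t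
    have h := hC1 (mul u (i t)) y c
    have hcid : ∀ s, m1 s c = s := fun s => rip' s c
    rw [hcid, hcid] at h
    -- h : m1 x (m1 y y) = m1 (m1 x y) y   with x = u * i t
    simp only [hm1, hict] at h
    rw [rip' u t] at h
    exact h.symm
  -- ========== flexibility ==========
  have flex : ∀ x b, mul (mul x b) x = mul x (mul b x) := by
    intro x b
    have h := leftBol x b (i x)
    rw [hi, he2] at h
    calc mul (mul x b) x = mul (mul (mul x (mul b x)) (i x)) x := by rw [← h]
      _ = mul x (mul b x) := rip' _ x
  -- ========== Moufang ==========
  intro x y z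
  have h1 := leftBol x (mul y (i x)) (mul z x)
  rw [rip' y x] at h1
  -- h1 : mul x (mul (mul y (i x)) (mul x (mul z x))) = mul (mul x y) (mul z x)
  have h2 : mul x (mul z x) = mul (mul x z) x := (flex x z).symm
  rw [h2] at h1
  have h3 := rightBol (mul y (i x)) x z
  rw [rip' y x] at h3
  -- h3 : mul (mul y z) x = mul (mul y (i x)) (mul (mul x z) x)
  rw [← h3] at h1
  -- h1 : mul x (mul (mul y z) x) = mul (mul x y) (mul z x)
  rw [flex x (mul y z)]
  exact h1.symm
end

section
/- Every LC-loop that is a universal loop (all its loop isotopes are LC-loops) is a left Bol loop. -/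
/-- The LC-loop identity. -/
def LCIdentity {α : Type*} (mul : α → α → α) : Prop :=
  ∀ x y z, mul (mul x x) (mul y z) = mul (mul x (mul x y)) z

/-- An LC-loop has (two-sided) left inverses for left translations. -/
theorem lip_of_lc {α : Type*} (mul : α → α → α) (e : α) (hG : IsLoop mul e)
    (hLC : LCIdentity mul) :
    ∀ x : α, ∃ y : α, (∀ z, mul x (mul y z) = z) ∧ (∀ z, mul y (mul x z) = z) := by
  obtain ⟨he, he', hl, _⟩ := hG
  intro x
  -- left alternative law
  have lalt : ∀ u v, mul (mul u u) v = mul u (mul u v) := by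
    intro u v
    have h := hLC u v e
    rwa [he' v, he' (mul u (mul u v))] at h
  -- choose y with (xx) y = x
  obtain ⟨y, hy⟩ := (hl (mul x x)).2 x
  have key : ∀ z, mul x (mul y z) = z := by
    intro z
    have h := hLC x y z
    rw [lalt x (mul y z), ← lalt x y, hy] at h
    exact (hl x).1 h
  refine ⟨y, key, fun z => ?_⟩
  have := key (mul x z)
  -- mul x (mul y (mul x z)) = mul x z
  exact (hl x).1 this

/-- A universal LC-loop (every loop isotope is an LC-loop) is a left Bol loop. -/
theorem universal_lc_loop_is_left_bol {Ω : Type u}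
    (mul : Ω → Ω → Ω) (e : Ω) (hG : IsLoop mul e)
    (hLC : LCIdentity mul)
    (huniv : ∀ (H : Type u) (mul' : H → H → H) (e' : H), IsLoop mul' e' →
      ∀ (A B C : Ω ≃ H), (∀ x y, mul' (A x) (B y) = C (mul x y)) → LCIdentity mul') :
    ∀ x y z, mul x (mul y (mul x z)) = mul (mul x (mul y x)) z := by
  intro x y z
  obtain ⟨he, he', hl, hr⟩ := hG
  -- w is the left inverse of y: w (y u) = u and y (w u) = u
  obtain ⟨w, hw1, hw2⟩ := lip_of_lc mul e ⟨he, he', hl, hr⟩ hLC y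
  -- the principal isotope u ∘ v = u · (x \ v), with identity x
  set La : Ω ≃ Ω := Equiv.ofBijective (mul x) (hl x) with hLadef
  have hLa : ∀ v, La v = mul x v := fun v => rfl
  set mul' : Ω → Ω → Ω := fun u v => mul u (La.symm v) with hmul'
  have hsx : La.symm x = e := by
    rw [Equiv.symm_apply_eq, hLa, he']
  have hLoop' : IsLoop mul' x := by
    refine ⟨fun v => ?_, fun u => ?_, fun u => ?_, fun v => ?_⟩
    · show mul x (La.symm v) = v
      exact La.apply_symm_apply v
    · show mul u (La.symm x) = u
      rw [hsx, he']
    · show Function.Bijective ((mul u) ∘ La.symm)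
      exact (hl u).comp La.symm.bijective
    · exact hr (La.symm v)
  have hLC' : LCIdentity mul' := by
    refine huniv Ω mul' x hLoop' (Equiv.refl Ω) La (Equiv.refl Ω) (fun u v => ?_)
    show mul u (La.symm (La v)) = mul u v
    rw [La.symm_apply_apply]
  obtain ⟨w', _, hw'⟩ := lip_of_lc mul' x hLoop' hLC' w
  -- key: mul w' (La.symm u) = mul x (mul y u) for all u
  have key : ∀ u, mul w' (La.symm u) = mul x (mul y u) := by
    intro u
    have h := hw' (La (mul y u))
    show mul w' (La.symm u) = La (mul y u)
    rw [← h]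
    show mul w' (La.symm u) = mul w' (La.symm (mul w (La.symm (La (mul y u)))))
    rw [La.symm_apply_apply, hw2 u]
  have k1 : mul w' z = mul x (mul y (mul x z)) := by
    have h := key (La z)
    rwa [La.symm_apply_apply, hLa] at h
  have k2 : w' = mul x (mul y x) := by
    have h := key x
    rwa [hsx, he'] at h
  rw [← k1, ← k2]
end

section
/- Let G = (Ω,·) be a commutative loop with identity e and let H = (Ω,∘) be its e,g-principal isotope, x∘y = (x/g)·y, and suppose H is also commutative. Then G is a C-loop if and only if H is a C-loop. -/
/-- One direction: if the commutative loop G is a C-loop, so is its commutative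
e,g-principal isotope H. -/
lemma aux_forward {Ω : Type*}
    (mul : Ω → Ω → Ω) (e : Ω) (hG : IsLoop mul e)
    (hcomm : ∀ x y, mul x y = mul y x)
    (g : Ω) (div : Ω → Ω → Ω) (hdiv : ∀ x, mul (div x g) g = x)
    (omul : Ω → Ω → Ω) (homul : ∀ x y, omul x y = mul (div x g) y)
    (hcomm' : ∀ x y, omul x y = omul y x)
    (hC : CIdentity mul) : CIdentity omul := by
  obtain ⟨hle, hre, hlb, hrb⟩ := hG
  have Rinj : ∀ a b : Ω, mul a g = mul b g → a = b := fun a b h => (hrb g).1 h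
  have hdiv2 : ∀ b, div (mul b g) g = b := fun b => Rinj _ _ (hdiv _)
  -- g is a middle nucleus element
  have Ng : ∀ b u, mul (mul b g) u = mul b (mul g u) := by
    intro b u
    have h := hcomm' (mul b g) (mul g u)
    rw [homul, homul, hdiv2] at h
    have hgu : div (mul g u) g = u := Rinj _ _ (by rw [hdiv, hcomm])
    rw [hgu] at h
    rw [h, hcomm]
  have Rsq : ∀ a b, mul (mul a b) b = mul a (mul b b) := by
    intro a b
    have h := hC a b e
    rw [hre, hre] at h
    exact h.symm
  have Lsq : ∀ b z, mul b (mul b z) = mul (mul b b) z := by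
    intro b z
    have h := hC e b z
    rw [hle, hle] at h
    exact h
  -- squares are middle nucleus elements (since G is a C-loop)
  have Ns : ∀ q x y, mul x (mul (mul q q) y) = mul (mul x (mul q q)) y := by
    intro q x y
    rw [← Lsq, hC, Rsq]
  have fmul : ∀ a u, mul (div a g) (mul g u) = mul a u := by
    intro a u
    rw [← Ng, hdiv]
  intro x y z
  rw [homul, homul, homul, homul, homul, homul]
  set p := div x g with hp
  set q := div y g with hq
  have hy : mul q g = y := hdiv y
  obtain ⟨u, hu⟩ := (hlb g).2 z
  -- hu : mul g u = z
  -- compute the inner product mul (div (mul p y) g) y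
  have key : mul (div (mul p y) g) y = mul (mul p (mul q q)) g := by
    have hy' : y = mul g q := by rw [← hy, hcomm]
    calc mul (div (mul p y) g) y = mul (div (mul p y) g) (mul g q) := by rw [← hy']
      _ = mul (mul p y) q := fmul _ _
      _ = mul (mul p (mul g q)) q := by rw [← hy']
      _ = mul (mul (mul p g) q) q := by rw [Ng]
      _ = mul (mul p g) (mul q q) := Rsq _ _
      _ = mul p (mul g (mul q q)) := Ng _ _
      _ = mul p (mul (mul q q) g) := by rw [hcomm g]
      _ = mul (mul p (mul q q)) g := Ns _ _ _
  rw [← hu, key, hdiv2, Lsq, Ns]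

/-- If a commutative loop G and its commutative e,g-principal isotope H,
x∘y = (x/g)·y, are given, then G is a C-loop iff H is a C-loop. -/
theorem commutative_c_loop_isotope {Ω : Type*}
    (mul : Ω → Ω → Ω) (e : Ω) (hG : IsLoop mul e)
    (hcomm : ∀ x y, mul x y = mul y x)
    (g : Ω) (div : Ω → Ω → Ω) (hdiv : ∀ x, mul (div x g) g = x)
    (omul : Ω → Ω → Ω) (homul : ∀ x y, omul x y = mul (div x g) y)
    (hcomm' : ∀ x y, omul x y = omul y x) :
    CIdentity mul ↔ CIdentity omul := by
  obtain ⟨hle, hre, hlb, hrb⟩ := hG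
  have Rinj : ∀ a b : Ω, mul a g = mul b g → a = b := fun a b h => (hrb g).1 h
  have hdiv2 : ∀ b, div (mul b g) g = b := fun b => Rinj _ _ (hdiv _)
  have hdgg : div g g = e := Rinj _ _ (by rw [hdiv, hle])
  have fbij : Function.Bijective (fun x => div x g) := by
    apply Function.bijective_iff_has_inverse.2
    exact ⟨fun u => mul u g, fun x => hdiv x, fun u => hdiv2 u⟩
  -- H is a loop with identity g
  have hH : IsLoop omul g := by
    refine ⟨fun x => ?_, fun x => ?_, fun a => ?_, fun a => ?_⟩
    · rw [homul, hdgg, hle]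
    · rw [homul, hdiv]
    · have : omul a = mul (div a g) := funext fun y => homul a y
      rw [this]; exact hlb _
    · have : (fun x => omul x a) = (fun t => mul t a) ∘ (fun x => div x g) :=
        funext fun x => homul x a
      rw [this]; exact (hrb a).comp fbij
  have hdiv' : ∀ x, omul ((fun x (_ : Ω) => mul x g) x e) e = x := by
    intro x
    show omul (mul x g) e = x
    rw [homul, hdiv2, hre]
  have homul' : ∀ x y, mul x y = omul ((fun x (_ : Ω) => mul x g) x e) y := by
    intro x y
    show mul x y = omul (mul x g) y
    rw [homul, hdiv2]
  constructor
  · exact aux_forward mul e ⟨hle, hre, hlb, hrb⟩ hcomm g div hdiv omul homul hcomm'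
  · exact aux_forward omul g hH hcomm' e (fun x _ => mul x g) hdiv' mul homul' hcomm
end
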